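/- arXiv:2003.06197 — 2 statements merged into one kernel-verified Lean document; each statement's English description precedes it below -/
import Mathlib

section
/- Rogue key attack with signing oracle: if σ_att = h^β · (∏_{i=1}^n h^{sk_i})^{-1} and pk_att = g₁^β · (∏_{i=1}^n g₁^{sk_i})^{-1}, then e(g₁, σ_att) = e(pk_att, h); i.e., the forged signature verifies under the rogue key alone. -/
/-- Rogue key attack with signing oracle: if
`σ_att = h^β · (∏ i, h^(sk i))⁻¹` and `pk_att = g₁^β · (∏ i, g₁^(sk i))⁻¹`,
then `e(g₁, σ_att) = e(pk_att, h)`: the forged signature verifies under the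
rogue key alone. -/
theorem stmt_18 {G0 G1 GT : Type*} [CommGroup G0] [CommGroup G1] [CommGroup GT]
    [Fintype G0] [Fintype G1] [Fintype GT] (q : ℕ) (hq : q.Prime)
    (h0 : Fintype.card G0 = q) (h1 : Fintype.card G1 = q) (hT : Fintype.card GT = q)
    (e : G1 → G0 → GT)
    (hbil : ∀ (x : G1) (y : G0) (m n : ℤ), e (x ^ m) (y ^ n) = (e x y) ^ (m * n))
    (hmul : ∀ (x : G1) (y y' : G0), e x (y * y') = e x y * e x y')
    (hmul' : ∀ (x x' : G1) (y : G0), e (x * x') y = e x y * e x' y)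
    (g₁ : G1) (hg : ∀ x : G1, x ∈ Subgroup.zpowers g₁) (h : G0)
    (n : ℕ) (β : ZMod q) (sk : Fin n → ZMod q) (σ_att : G0) (pk_att : G1)
    (hσ : σ_att = h ^ β.val * (∏ i, h ^ (sk i).val)⁻¹)
    (hpk : pk_att = g₁ ^ β.val * (∏ i, g₁ ^ (sk i).val)⁻¹) :
    e g₁ σ_att = e pk_att h := by
  set m : ℤ := (β.val : ℤ) - ∑ i, ((sk i).val : ℤ) with hm
  have hσ' : σ_att = h ^ m := by
    rw [hσ, hm, zpow_sub, zpow_natCast]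
    congr 1
    rw [← Nat.cast_sum, zpow_natCast, ← Finset.prod_pow_eq_pow_sum]
  have hpk' : pk_att = g₁ ^ m := by
    rw [hpk, hm, zpow_sub, zpow_natCast]
    congr 1
    rw [← Nat.cast_sum, zpow_natCast, ← Finset.prod_pow_eq_pow_sum]
  calc e g₁ σ_att = e (g₁ ^ (1 : ℤ)) (h ^ m) := by rw [hσ', zpow_one]
    _ = (e g₁ h) ^ (1 * m) := hbil _ _ _ _
    _ = (e g₁ h) ^ (m * 1) := by ring_nf
    _ = e (g₁ ^ m) (h ^ (1 : ℤ)) := (hbil _ _ _ _).symm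
    _ = e pk_att h := by rw [hpk', zpow_one]
end

section
/- If total payments assigned from consumer c in a block satisfy ∑_{p} a_p ≤ μ − w where μ is the operator-owned balance and w the amount already withdrawn, and withdrawals are processed sequentially each transferring exactly min(a_p, μ − w_current) and updating w_current, then every merchant p receives exactly a_p. -/
/-!
As long as every earlier payment was made in full, the running withdrawn amount is
`W i = w + ∑_{j<i} a j`. Since the `a j` are nonnegative, `W i + a i = w + ∑_{j≤i} a j` is at most
`w + ∑_{j<k} a j ≤ μ`, so the next payment `min (a i) (μ - W i)` is again paid in full.
-/

open Finset

section SequentialWithdrawal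

variable {α : Type*} [AddCommGroup α] [LinearOrder α] [IsOrderedAddMonoid α]
  {k : ℕ} {μ w : α} {a W : ℕ → α}

theorem sum_range_le_sum_range_of_nonneg (ha : ∀ i, i < k → 0 ≤ a i) {i : ℕ} (hi : i ≤ k) :
    ∑ j ∈ range i, a j ≤ ∑ j ∈ range k, a j :=
  sum_le_sum_of_subset_of_nonneg (range_subset_range.2 hi)
    fun j hj _ => ha j (mem_range.1 hj)

theorem le_sub_of_withdrawn_eq_add_sum (ha : ∀ i, i < k → 0 ≤ a i)
    (hsum : ∑ i ∈ range k, a i ≤ μ - w) {i : ℕ} (hi : i < k)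
    (hWi : W i = w + ∑ j ∈ range i, a j) :
    a i ≤ μ - W i := by
  have hpartial := sum_range_le_sum_range_of_nonneg ha hi
  rw [sum_range_succ] at hpartial
  rw [hWi, le_sub_iff_add_le]
  calc a i + (w + ∑ j ∈ range i, a j) = w + (∑ j ∈ range i, a j + a i) := by abel
    _ ≤ w + (μ - w) := add_le_add_right (hpartial.trans hsum) w
    _ = μ := add_sub_cancel w μ

theorem withdrawn_eq_add_sum (ha : ∀ i, i < k → 0 ≤ a i)
    (hsum : ∑ i ∈ range k, a i ≤ μ - w) (hW0 : W 0 = w)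
    (hWstep : ∀ i, i < k → W (i + 1) = W i + min (a i) (μ - W i)) :
    ∀ i, i ≤ k → W i = w + ∑ j ∈ range i, a j
  | 0, _ => by simp [hW0]
  | i + 1, hi => by
    have hWi := withdrawn_eq_add_sum ha hsum hW0 hWstep i (Nat.le_of_succ_le hi)
    rw [hWstep i hi, min_eq_left (le_sub_of_withdrawn_eq_add_sum ha hsum hi hWi), hWi,
      sum_range_succ, add_assoc]

end SequentialWithdrawal

theorem stmt_19_general (k : ℕ) (μ w : ℝ) (a : ℕ → ℝ) (W : ℕ → ℝ)
    (ha : ∀ i, i < k → 0 ≤ a i)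
    (hsum : ∑ i ∈ Finset.range k, a i ≤ μ - w)
    (hW0 : W 0 = w)
    (hWstep : ∀ i, i < k → W (i + 1) = W i + min (a i) (μ - W i)) :
    ∀ i, i < k → min (a i) (μ - W i) = a i := fun i hi =>
  min_eq_left <| le_sub_of_withdrawn_eq_add_sum ha hsum hi <|
    withdrawn_eq_add_sum ha hsum hW0 hWstep i hi.le

/-- Sequential withdrawal completeness: if the total assigned amounts satisfy
`∑_{i < k} a i ≤ μ - w`, and withdrawals are processed sequentially from
`W 0 = w` with each step transferring `min (a i) (μ - W i)` and updating
`W (i+1) = W i + min (a i) (μ - W i)`, then every merchant `i < k` receives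
exactly `a i`, i.e. `min (a i) (μ - W i) = a i`. -/
theorem stmt_19 (k : ℕ) (μ w : ℝ) (a : ℕ → ℝ) (W : ℕ → ℝ)
    (hμ : 0 ≤ μ) (hw : 0 ≤ w) (hwμ : w ≤ μ) (ha : ∀ i, i < k → 0 ≤ a i)
    (hsum : ∑ i ∈ Finset.range k, a i ≤ μ - w)
    (hW0 : W 0 = w)
    (hWstep : ∀ i, i < k → W (i + 1) = W i + min (a i) (μ - W i)) :
    ∀ i, i < k → min (a i) (μ - W i) = a i :=
  stmt_19_general k μ w a W ha hsum hW0 hWstep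
end
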